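/- Let H ∈ 𝔄 be reflection invariant and globally gauge invariant. If the full matrix of coupling constants J = (J_{𝔍𝔍'})_{𝔍,𝔍'∈𝒫₊} of H is positive semidefinite, then the Boltzmann functional ω_H(A) = Tr(A·e^{−H}) is reflection positive on 𝔄₊, i.e. 0 ≤ ω_H(Θ(A)∘A) for all A ∈ 𝔄₊. -/

import Mathlib

open ComplexOrder

noncomputable section

/-- The setting of the paper: a finite set `Λ` with a fixed-point free involution `ϑ`
exchanging `Λp` and its complement, the Clifford algebra (algebra of Majoranas) `carrier`
with self-adjoint generators `c i`, the global gauge automorphism `gauge`, the antilinear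
reflection `*`-automorphism `Θ`, a square root `ζ` of `-1`, the twisted product `twist`,
a choice `P` of orderings of the subsets of `Λp` (giving the bases
`{C J : J ∈ P}` of `𝔄₊` and `{Θ(C J) ∘ C J' : J, J' ∈ P}` of `𝔄`),
and the tracial state `Tr` picking out the coefficient of `1` in the basis expansion. -/
structure MajoranaSetting where
  Λ : Type
  [fintypeΛ : Fintype Λ]
  [deceqΛ : DecidableEq Λ]
  ϑ : Λ → Λ
  ϑ_invol : Function.Involutive ϑ
  ϑ_fixfree : ∀ i, ϑ i ≠ i
  Λp : Finset Λ
  ϑ_exch : ∀ i, i ∈ Λp ↔ ϑ i ∉ Λp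
  carrier : Type
  [nring : NormedRing carrier]
  [nalg : NormedAlgebra ℂ carrier]
  [cmpl : CompleteSpace carrier]
  [starring : StarRing carrier]
  [starmod : StarModule ℂ carrier]
  c : Λ → carrier
  c_star : ∀ i, star (c i) = c i
  clifford : ∀ i j, c i * c j + c j * c i = if i = j then (2 : carrier) else 0
  gauge : carrier ≃ₐ[ℂ] carrier
  gauge_c : ∀ i, gauge (c i) = - c i
  Θ : carrier → carrier
  Θ_add : ∀ x y, Θ (x + y) = Θ x + Θ y
  Θ_smul : ∀ (z : ℂ) (x), Θ (z • x) = (starRingEnd ℂ z) • Θ x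
  Θ_mul : ∀ x y, Θ (x * y) = Θ x * Θ y
  Θ_star : ∀ x, Θ (star x) = star (Θ x)
  Θ_invol : ∀ x, Θ (Θ x) = x
  Θ_c : ∀ i, Θ (c i) = c (ϑ i)
  ζ : ℂ
  ζ_sq : ζ ^ 2 = -1
  twist : carrier → carrier → carrier
  twist_add_left : ∀ x x' y, twist (x + x') y = twist x y + twist x' y
  twist_add_right : ∀ x y y', twist x (y + y') = twist x y + twist x y'
  twist_smul_left : ∀ (z : ℂ) (x y), twist (z • x) y = z • twist x y
  twist_smul_right : ∀ (z : ℂ) (x y), twist x (z • y) = z • twist x y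
  twist_spec : ∀ (Am Ap Bm Bp : carrier) (a b a' b' : ℕ),
    a ≤ 1 → b ≤ 1 → a' ≤ 1 → b' ≤ 1 →
    Am ∈ Algebra.adjoin ℂ (c '' {i | i ∉ Λp}) →
    Ap ∈ Algebra.adjoin ℂ (c '' {i | i ∈ Λp}) →
    Bm ∈ Algebra.adjoin ℂ (c '' {i | i ∉ Λp}) →
    Bp ∈ Algebra.adjoin ℂ (c '' {i | i ∈ Λp}) →
    gauge Am = ((-1 : ℂ) ^ a) • Am →
    gauge Ap = ((-1 : ℂ) ^ b) • Ap →
    gauge Bm = ((-1 : ℂ) ^ a') • Bm →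
    gauge Bp = ((-1 : ℂ) ^ b') • Bp →
    twist (Am * Ap) (Bm * Bp)
      = ζ ^ ((a * b' : ℤ) - (b * a' : ℤ)) • (Am * Ap * (Bm * Bp))
  P : Finset (List Λ)
  P_nodup : ∀ J ∈ P, J.Nodup
  P_sub : ∀ J ∈ P, ∀ i ∈ J, i ∈ Λp
  P_unique : ∀ s : Finset Λ, s ⊆ Λp → ∃! J, J ∈ P ∧ J.toFinset = s
  Tr : carrier →ₗ[ℂ] ℂ
  Tr_basis : ∀ J ∈ P, ∀ J' ∈ P,
    Tr (twist (Θ ((J.map c).prod)) ((J'.map c).prod))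
      = if J = [] ∧ J' = [] then 1 else 0
  basis_indep : LinearIndependent ℂ
    (fun p : {J // J ∈ P} × {J // J ∈ P} =>
      twist (Θ ((p.1.1.map c).prod)) ((p.2.1.map c).prod))
  basis_span : ∀ x : carrier, x ∈ Submodule.span ℂ
    (Set.range fun p : {J // J ∈ P} × {J // J ∈ P} =>
      twist (Θ ((p.1.1.map c).prod)) ((p.2.1.map c).prod))
  plus_span : ∀ x ∈ Algebra.adjoin ℂ (c '' {i | i ∈ Λp}),
    x ∈ Submodule.span ℂ (Set.range fun J : {J // J ∈ P} => ((J.1.map c).prod))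

attribute [instance] MajoranaSetting.fintypeΛ MajoranaSetting.deceqΛ
  MajoranaSetting.nring MajoranaSetting.nalg MajoranaSetting.cmpl
  MajoranaSetting.starring MajoranaSetting.starmod

namespace MajoranaSetting

variable (S : MajoranaSetting)

/-- The subalgebra `𝔄₊` generated by the Majoranas on the `+` side. -/
def Aplus : Subalgebra ℂ S.carrier := Algebra.adjoin ℂ (S.c '' {i | i ∈ S.Λp})

/-- The subalgebra `𝔄₋` generated by the Majoranas on the `-` side. -/
def Aminus : Subalgebra ℂ S.carrier := Algebra.adjoin ℂ (S.c '' {i | i ∉ S.Λp})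

/-- The monomial `C_𝔍 = c_{i₁} ⋯ c_{i_k}`. -/
def C (J : List S.Λ) : S.carrier := (J.map S.c).prod

/-- `q_𝔍 = (-1)^{k(k-1)/2}`. -/
def q (J : List S.Λ) : ℂ := (-1 : ℂ) ^ (J.length * (J.length - 1) / 2)

/-- `s_𝔍 = ζ^{k(k-1)/2}`. -/
def sgn (J : List S.Λ) : ℂ := S.ζ ^ (J.length * (J.length - 1) / 2)

/-- The exponential `e^x` in the (finite-dimensional) algebra `𝔄`. -/
def expm (x : S.carrier) : S.carrier := NormedSpace.exp x

/-- The Hamiltonian `H = -∑_{𝔍,𝔍' ∈ 𝒫₊} J_{𝔍𝔍'} Θ(C_𝔍) ∘ C_𝔍'`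
determined by coupling constants `Jc`. -/
def Ham (Jc : List S.Λ → List S.Λ → ℂ) : S.carrier :=
  - ∑ J ∈ S.P, ∑ J' ∈ S.P, Jc J J' • S.twist (S.Θ (S.C J)) (S.C J')

/-- The index type of the basis `{C J : J ∈ 𝒫₊}`. -/
abbrev PIdx := {J : List S.Λ // J ∈ S.P}

/-- The index type `𝒫₊ - {∅}` of couplings across the reflection plane. -/
abbrev PIdx0 := {p : S.PIdx // p.1 ≠ []}

/-- The full matrix of coupling constants. -/
def Jmat (Jc : List S.Λ → List S.Λ → ℂ) : Matrix S.PIdx S.PIdx ℂ :=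
  Matrix.of fun p q => Jc p.1 q.1

/-- The matrix `J⁰` of coupling constants across the reflection plane. -/
def Jmat0 (Jc : List S.Λ → List S.Λ → ℂ) : Matrix S.PIdx0 S.PIdx0 ℂ :=
  Matrix.of fun p q => Jc p.1.1 q.1.1

end MajoranaSetting

/-!
Let `𝒦` be the additive cone spanned by the products `Θ(u) ∘ u` with `u ∈ 𝔄₊` gauge-homogeneous.
It is closed under multiplication, `Θ(u) ∘ u · Θ(v) ∘ v = Θ(uv) ∘ (uv)`, because the twist by `ζ`
exactly compensates the graded commutation of `u` with `Θ(v)`; and `Tr ≥ 0` on `𝒦`, since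
`Tr(Θ(u) ∘ u) = |Tr u|²`. For arbitrary `u ∈ 𝔄₊ = 𝔄₊⁰ ⊕ 𝔄₊¹` the gauge-even part of `Θ(u) ∘ u`
is `Θ(u₀) ∘ u₀ + Θ(u₁) ∘ u₁ ∈ 𝒦`, the cross terms being odd. Writing the positive semidefinite
coupling matrix as a sum of rank-one matrices `v vᴴ` turns `-H` into a sum of `Θ(u) ∘ u`, and by
gauge invariance `-H` equals its even part, so `-H ∈ 𝒦`. Hence `Tr(Q e^{-H}) ≥ 0` for `Q ∈ 𝒦`,
term by term in the exponential series. Finally `Tr(Θ(A) ∘ A · e^{-H})` only sees the even part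
of `Θ(A) ∘ A`, as `Tr` and `e^{-H}` are gauge invariant.
-/

theorem Algebra.mul_eq_map_mul_of_mem_adjoin {R A : Type*} [CommSemiring R] [Semiring A]
    [Algebra R A] (φ : A →ₐ[R] A) {s : Set A} {a : A} (h : ∀ z ∈ s, a * z = φ z * a)
    {x : A} (hx : x ∈ Algebra.adjoin R s) : a * x = φ x * a := by
  induction hx using Algebra.adjoin_induction with
  | mem z hz => exact h z hz
  | algebraMap r => rw [AlgHom.commutes, Algebra.commutes]
  | add x y _ _ hx hy => rw [mul_add, hx, hy, map_add, add_mul]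
  | mul x y _ _ hx hy => rw [← mul_assoc, hx, mul_assoc, hy, ← mul_assoc, map_mul]

theorem NormedSpace.exp_nonneg_of_pow_nonneg {A : Type*} [NormedRing A] [NormedAlgebra ℂ A]
    [CompleteSpace A] (φ : A →L[ℂ] ℂ) {T : A} (h : ∀ n, 0 ≤ φ (T ^ n)) :
    0 ≤ φ (NormedSpace.exp T) := by
  refine ((NormedSpace.exp_series_hasSum_exp' (𝕂 := ℂ) T).mapL φ).nonneg fun n => ?_
  rw [map_smul, smul_eq_mul]
  exact mul_nonneg (by positivity) (h n)

namespace MajoranaSetting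

variable (S : MajoranaSetting)

instance : FiniteDimensional ℂ S.carrier :=
  ⟨(Submodule.eq_top_iff'.mpr S.basis_span) ▸ Submodule.fg_span (Set.finite_range _)⟩

lemma Θ_one : S.Θ 1 = 1 := by
  have h := S.Θ_mul (S.Θ 1) 1
  rwa [mul_one, S.Θ_invol, one_mul, eq_comm] at h

lemma Θ_algebraMap (z : ℂ) : S.Θ (algebraMap ℂ S.carrier z) = algebraMap ℂ S.carrier (star z) := by
  rw [Algebra.algebraMap_eq_smul_one, Algebra.algebraMap_eq_smul_one, S.Θ_smul, S.Θ_one]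
  rfl

lemma Θ_mem_Aminus {x : S.carrier} (hx : x ∈ S.Aplus) : S.Θ x ∈ S.Aminus := by
  induction hx using Algebra.adjoin_induction with
  | mem z hz =>
      obtain ⟨i, hi, rfl⟩ := hz
      exact Algebra.subset_adjoin ⟨S.ϑ i, (S.ϑ_exch i).mp hi, (S.Θ_c i).symm⟩
  | algebraMap z => rw [Θ_algebraMap]; exact Subalgebra.algebraMap_mem _ _
  | add x y _ _ hx hy => rw [S.Θ_add]; exact add_mem hx hy
  | mul x y _ _ hx hy => rw [S.Θ_mul]; exact mul_mem hx hy

lemma gauge_Θ {x : S.carrier} (hx : x ∈ S.Aplus) : S.gauge (S.Θ x) = S.Θ (S.gauge x) := by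
  induction hx using Algebra.adjoin_induction with
  | mem z hz =>
      obtain ⟨i, -, rfl⟩ := hz
      rw [S.Θ_c, S.gauge_c, S.gauge_c, ← neg_one_smul ℂ (S.c i), S.Θ_smul, S.Θ_c]
      simp
  | algebraMap z => simp only [Θ_algebraMap, AlgEquiv.commutes]
  | add x y _ _ hx hy => rw [S.Θ_add, map_add, map_add, hx, hy, S.Θ_add]
  | mul x y _ _ hx hy => rw [S.Θ_mul, map_mul, map_mul, hx, hy, S.Θ_mul]

lemma gauge_mem_Aplus {x : S.carrier} (hx : x ∈ S.Aplus) : S.gauge x ∈ S.Aplus := by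
  induction hx using Algebra.adjoin_induction with
  | mem z hz =>
      obtain ⟨i, hi, rfl⟩ := hz
      rw [S.gauge_c]
      exact neg_mem (Algebra.subset_adjoin ⟨i, hi, rfl⟩)
  | algebraMap z => rw [AlgEquiv.commutes]; exact Subalgebra.algebraMap_mem _ _
  | add x y _ _ hx hy => rw [map_add]; exact add_mem hx hy
  | mul x y _ _ hx hy => rw [map_mul]; exact mul_mem hx hy

lemma gauge_gauge {x : S.carrier} (hx : x ∈ S.Aplus) : S.gauge (S.gauge x) = x := by
  refine AlgHom.adjoin_le_equalizer (S.gauge.trans S.gauge : S.carrier →ₐ[ℂ] S.carrier)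
    (AlgHom.id ℂ S.carrier) ?_ hx
  rintro _ ⟨i, -, rfl⟩
  simp [S.gauge_c]

lemma C_mem_Aplus {J : List S.Λ} (hJ : J ∈ S.P) : S.C J ∈ S.Aplus :=
  Subalgebra.list_prod_mem _ fun _ hx => by
    obtain ⟨i, hi, rfl⟩ := List.mem_map.mp hx
    exact Algebra.subset_adjoin ⟨i, S.P_sub J hJ i hi, rfl⟩

lemma gauge_C (J : List S.Λ) : S.gauge (S.C J) = ((-1 : ℂ) ^ J.length) • S.C J := by
  have h : ⇑S.gauge ∘ S.c = Neg.neg ∘ S.c := funext S.gauge_c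
  rw [C, map_list_prod, List.map_map, h, ← List.map_map, List.prod_map_neg, List.length_map]
  simp [Algebra.smul_def]

def AplusParity (ε : ℕ) : Submodule ℂ S.carrier :=
  Subalgebra.toSubmodule S.Aplus ⊓ Module.End.eigenspace S.gauge.toLinearMap ((-1) ^ ε)

variable {S}

lemma mem_AplusParity {ε : ℕ} {x : S.carrier} :
    x ∈ S.AplusParity ε ↔ x ∈ S.Aplus ∧ S.gauge x = (-1 : ℂ) ^ ε • x := by
  simp [AplusParity]

lemma C_mem_AplusParity {J : List S.Λ} (hJ : J ∈ S.P) : S.C J ∈ S.AplusParity (J.length % 2) :=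
  mem_AplusParity.mpr ⟨S.C_mem_Aplus hJ, by rw [gauge_C, ← neg_one_pow_eq_pow_mod_two]⟩

lemma mul_mem_AplusParity {ε ε' : ℕ} {x y : S.carrier} (hx : x ∈ S.AplusParity ε)
    (hy : y ∈ S.AplusParity ε') : x * y ∈ S.AplusParity ((ε + ε') % 2) := by
  rw [mem_AplusParity] at *
  refine ⟨mul_mem hx.1 hy.1, ?_⟩
  rw [map_mul, hx.2, hy.2, smul_mul_smul_comm, ← pow_add, ← neg_one_pow_eq_pow_mod_two]

variable (S)

def evenPart : S.carrier →ₗ[ℂ] S.carrier := (2 : ℂ)⁻¹ • (LinearMap.id + S.gauge.toLinearMap)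

def oddPart : S.carrier →ₗ[ℂ] S.carrier := (2 : ℂ)⁻¹ • (LinearMap.id - S.gauge.toLinearMap)

variable {S}

lemma evenPart_apply (x : S.carrier) : S.evenPart x = (2 : ℂ)⁻¹ • (x + S.gauge x) := rfl

lemma oddPart_apply (x : S.carrier) : S.oddPart x = (2 : ℂ)⁻¹ • (x - S.gauge x) := rfl

lemma evenPart_add_oddPart (x : S.carrier) : S.evenPart x + S.oddPart x = x := by
  rw [evenPart_apply, oddPart_apply, ← smul_add, add_add_sub_cancel, ← two_smul ℂ, smul_smul,
    inv_mul_cancel₀ two_ne_zero, one_smul]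

lemma evenPart_mem {x : S.carrier} (hx : x ∈ S.Aplus) : S.evenPart x ∈ S.AplusParity 0 := by
  refine mem_AplusParity.mpr ⟨?_, ?_⟩
  · exact Submodule.smul_mem (Subalgebra.toSubmodule S.Aplus) _
      (add_mem hx (S.gauge_mem_Aplus hx))
  · rw [evenPart_apply, map_smul, map_add, S.gauge_gauge hx, add_comm, pow_zero, one_smul]

lemma oddPart_mem {x : S.carrier} (hx : x ∈ S.Aplus) : S.oddPart x ∈ S.AplusParity 1 := by
  refine mem_AplusParity.mpr ⟨?_, ?_⟩
  · exact Submodule.smul_mem (Subalgebra.toSubmodule S.Aplus) _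
      (sub_mem hx (S.gauge_mem_Aplus hx))
  · rw [oddPart_apply, map_smul, map_sub, S.gauge_gauge hx, pow_one, neg_one_smul, ← smul_neg,
      neg_sub]

lemma evenPart_of_gauge_eq {x : S.carrier} (h : S.gauge x = x) : S.evenPart x = x := by
  rw [evenPart_apply, h, ← two_smul ℂ, smul_smul, inv_mul_cancel₀ two_ne_zero, one_smul]

lemma evenPart_of_gauge_eq_neg {x : S.carrier} (h : S.gauge x = -x) : S.evenPart x = 0 := by
  rw [evenPart_apply, h, add_neg_cancel, smul_zero]

lemma c_mul_c_of_ne {i j : S.Λ} (h : i ≠ j) : S.c i * S.c j = -(S.c j * S.c i) := by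
  have hc := S.clifford i j
  rwa [if_neg h, add_eq_zero_iff_eq_neg] at hc

lemma c_mul_eq_gauge_mul {i : S.Λ} (hi : i ∉ S.Λp) {x : S.carrier} (hx : x ∈ S.Aplus) :
    S.c i * x = S.gauge x * S.c i := by
  refine Algebra.mul_eq_map_mul_of_mem_adjoin (S.gauge : S.carrier →ₐ[ℂ] S.carrier) ?_ hx
  rintro _ ⟨j, hj, rfl⟩
  rw [AlgEquiv.coe_toAlgHom, S.gauge_c, neg_mul, c_mul_c_of_ne (by rintro rfl; exact hi hj)]

lemma gauge_pow_apply {s : ℂ} {y : S.carrier} (h : S.gauge y = s • y) (n : ℕ) :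
    (S.gauge ^ n) y = s ^ n • y := by
  induction n with
  | zero => simp
  | succ n ih => rw [pow_succ, AlgEquiv.mul_apply, h, map_smul, ih, smul_smul, pow_succ']

lemma mul_eq_smul_mul_of_parity {ε ε' : ℕ} {x y : S.carrier} (hx : x ∈ S.AplusParity ε)
    (hy : y ∈ S.Aminus) (hgy : S.gauge y = (-1 : ℂ) ^ ε' • y) :
    x * y = (-1 : ℂ) ^ (ε * ε') • (y * x) := by
  obtain ⟨hxA, hgx⟩ := mem_AplusParity.mp hx
  have hgen : ∀ z ∈ S.c '' {i | i ∉ S.Λp},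
      x * z = ((S.gauge ^ ε : S.carrier ≃ₐ[ℂ] S.carrier) : S.carrier →ₐ[ℂ] S.carrier) z * x := by
    rintro _ ⟨j, hj, rfl⟩
    have hcx := c_mul_eq_gauge_mul hj hxA
    rw [hgx, smul_mul_assoc] at hcx
    rw [AlgEquiv.coe_toAlgHom, gauge_pow_apply (by rw [S.gauge_c, neg_one_smul]), smul_mul_assoc,
      hcx, smul_smul, ← mul_pow, neg_one_mul, neg_neg, one_pow, one_smul]
  rw [Algebra.mul_eq_map_mul_of_mem_adjoin _ hgen hy, AlgEquiv.coe_toAlgHom, gauge_pow_apply hgy,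
    ← pow_mul, smul_mul_assoc, mul_comm ε']

variable (S)

def reflForm : S.carrier →ₗ⋆[ℂ] S.carrier →ₗ[ℂ] S.carrier :=
  LinearMap.mk₂'ₛₗ (starRingEnd ℂ) (RingHom.id ℂ) (fun x y => S.twist (S.Θ x) y)
    (fun x x' y => by rw [S.Θ_add, S.twist_add_left])
    (fun z x y => by rw [S.Θ_smul, S.twist_smul_left])
    (fun x y y' => S.twist_add_right _ y y')
    (fun z x y => S.twist_smul_right z _ y)

variable {S}

lemma reflForm_apply (x y : S.carrier) : S.reflForm x y = S.twist (S.Θ x) y := rfl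

lemma Θ_mem_Aminus_of_parity {ε : ℕ} {x : S.carrier} (hx : x ∈ S.AplusParity ε) :
    S.Θ x ∈ S.Aminus ∧ S.gauge (S.Θ x) = (-1 : ℂ) ^ ε • S.Θ x := by
  obtain ⟨hxA, hgx⟩ := mem_AplusParity.mp hx
  refine ⟨S.Θ_mem_Aminus hxA, ?_⟩
  rw [S.gauge_Θ hxA, hgx, S.Θ_smul]
  simp

-- `AplusParity ε` only depends on `ε % 2`, the twist exponent does not: hence `ε ≤ 1`.
lemma reflForm_eq_smul_mul {ε ε' : ℕ} (hε : ε ≤ 1) (hε' : ε' ≤ 1) {x y : S.carrier}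
    (hx : x ∈ S.AplusParity ε) (hy : y ∈ S.AplusParity ε') :
    S.reflForm x y = S.ζ ^ ((ε : ℤ) * ε') • (S.Θ x * y) := by
  obtain ⟨hΘx, hgΘx⟩ := Θ_mem_Aminus_of_parity hx
  obtain ⟨hyA, hgy⟩ := mem_AplusParity.mp hy
  rw [reflForm_apply]
  simpa using S.twist_spec (S.Θ x) 1 1 y ε 0 0 ε' hε zero_le_one zero_le_one hε' hΘx
    (one_mem _) (one_mem _) hyA hgΘx (by simp) (by simp) hgy

lemma gauge_reflForm {ε ε' : ℕ} (hε : ε ≤ 1) (hε' : ε' ≤ 1) {x y : S.carrier}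
    (hx : x ∈ S.AplusParity ε) (hy : y ∈ S.AplusParity ε') :
    S.gauge (S.reflForm x y) = (-1 : ℂ) ^ (ε + ε') • S.reflForm x y := by
  rw [reflForm_eq_smul_mul hε hε' hx hy, map_smul, map_mul, (Θ_mem_Aminus_of_parity hx).2,
    (mem_AplusParity.mp hy).2, smul_mul_smul_comm, ← pow_add, smul_comm]

lemma reflForm_self_mul_reflForm_self {ε ε' : ℕ} (hε : ε ≤ 1) (hε' : ε' ≤ 1) {x y : S.carrier}
    (hx : x ∈ S.AplusParity ε) (hy : y ∈ S.AplusParity ε') :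
    S.reflForm x x * S.reflForm y y = S.reflForm (x * y) (x * y) := by
  obtain ⟨hΘy, hgΘy⟩ := Θ_mem_Aminus_of_parity hy
  have hxy := mul_mem_AplusParity hx hy
  rw [reflForm_eq_smul_mul hε hε hx hx, reflForm_eq_smul_mul hε' hε' hy hy,
    reflForm_eq_smul_mul (by omega) (by omega) hxy hxy, S.Θ_mul]
  have hcomm := mul_eq_smul_mul_of_parity hx hΘy hgΘy
  have hζ := S.ζ_sq
  calc S.ζ ^ ((ε : ℤ) * ε) • (S.Θ x * x) * S.ζ ^ ((ε' : ℤ) * ε') • (S.Θ y * y)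
      = (S.ζ ^ ((ε : ℤ) * ε) * S.ζ ^ ((ε' : ℤ) * ε')) • (S.Θ x * (x * S.Θ y) * y) := by
        rw [smul_mul_smul_comm]; simp only [mul_assoc]
    _ = (S.ζ ^ ((ε : ℤ) * ε) * S.ζ ^ ((ε' : ℤ) * ε') * (-1) ^ (ε * ε')) •
          (S.Θ x * S.Θ y * (x * y)) := by
        rw [hcomm, mul_smul_comm, smul_mul_assoc, smul_smul]; simp only [mul_assoc]
    _ = _ := by
        congr 1
        interval_cases ε <;> interval_cases ε' <;> norm_num
        linear_combination -hζ

lemma one_mem_AplusParity_zero : (1 : S.carrier) ∈ S.AplusParity 0 :=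
  mem_AplusParity.mpr ⟨one_mem _, by simp⟩

lemma reflForm_one_left {ε : ℕ} (hε : ε ≤ 1) {y : S.carrier} (hy : y ∈ S.AplusParity ε) :
    S.reflForm 1 y = y := by
  rw [reflForm_eq_smul_mul zero_le_one hε one_mem_AplusParity_zero hy, S.Θ_one]
  simp

variable (S)

def reflectionSquares : Submonoid S.carrier where
  carrier := {z | ∃ ε ≤ 1, ∃ u ∈ S.AplusParity ε, z = S.reflForm u u}
  one_mem' := ⟨0, zero_le_one, 1, one_mem_AplusParity_zero,
    (reflForm_one_left zero_le_one one_mem_AplusParity_zero).symm⟩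
  mul_mem' := by
    rintro _ _ ⟨ε, hε, x, hx, rfl⟩ ⟨ε', hε', y, hy, rfl⟩
    exact ⟨_, by omega, x * y, mul_mem_AplusParity hx hy,
      reflForm_self_mul_reflForm_self hε hε' hx hy⟩

def reflectionCone : Subsemiring S.carrier := S.reflectionSquares.subsemiringClosure

variable {S}

lemma nil_mem_P : [] ∈ S.P := by
  obtain ⟨J, ⟨hJ, hJnil⟩, -⟩ := S.P_unique ∅ (Finset.empty_subset _)
  rwa [← (List.toFinset_eq_empty_iff J).mp hJnil]

lemma Tr_C {J : List S.Λ} (hJ : J ∈ S.P) : S.Tr (S.C J) = if J = [] then 1 else 0 := by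
  have h := S.Tr_basis [] nil_mem_P J hJ
  change S.Tr (S.reflForm 1 (S.C J)) = _ at h
  simpa [reflForm_one_left (by omega) (C_mem_AplusParity hJ)] using h

lemma star_Tr_C {J : List S.Λ} (hJ : J ∈ S.P) : star (S.Tr (S.C J)) = S.Tr (S.C J) := by
  rw [Tr_C hJ]; split_ifs <;> simp

lemma Tr_reflForm_C {J J' : List S.Λ} (hJ : J ∈ S.P) (hJ' : J' ∈ S.P) :
    S.Tr (S.reflForm (S.C J) (S.C J')) = S.Tr (S.C J) * S.Tr (S.C J') := by
  refine (S.Tr_basis J hJ J' hJ').trans ?_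
  rw [Tr_C hJ, Tr_C hJ']
  split_ifs <;> simp_all

lemma reflForm_sum_smul_C (a b : S.PIdx → ℂ) :
    S.reflForm (∑ p, a p • S.C p) (∑ q, b q • S.C q)
      = ∑ p, ∑ q, (star (a p) * b q) • S.reflForm (S.C p) (S.C q) := by
  simp only [map_sum, map_smulₛₗ, LinearMap.sum_apply, LinearMap.smul_apply, Finset.smul_sum,
    smul_smul]
  rw [Finset.sum_comm]
  exact Finset.sum_congr rfl fun p _ => Finset.sum_congr rfl fun q _ => by rw [mul_comm]; rfl

lemma Tr_reflForm {x y : S.carrier} (hx : x ∈ S.Aplus) (hy : y ∈ S.Aplus) :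
    S.Tr (S.reflForm x y) = star (S.Tr x) * S.Tr y := by
  obtain ⟨a, rfl⟩ := (Submodule.mem_span_range_iff_exists_fun ℂ).mp (S.plus_span x hx)
  obtain ⟨b, rfl⟩ := (Submodule.mem_span_range_iff_exists_fun ℂ).mp (S.plus_span y hy)
  change S.Tr (S.reflForm (∑ p, a p • S.C p) (∑ q, b q • S.C q))
    = star (S.Tr (∑ p, a p • S.C p)) * S.Tr (∑ q, b q • S.C q)
  rw [reflForm_sum_smul_C]
  simp only [map_sum, map_smul, smul_eq_mul, star_sum, star_mul', Finset.sum_mul_sum]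
  refine Finset.sum_congr rfl fun p _ => Finset.sum_congr rfl fun q _ => ?_
  rw [Tr_reflForm_C p.2 q.2, star_Tr_C p.2]
  ring

lemma Tr_nonneg_of_mem_reflectionCone {z : S.carrier} (hz : z ∈ S.reflectionCone) :
    0 ≤ S.Tr z := by
  rw [reflectionCone, Submonoid.subsemiringClosure_mem] at hz
  induction hz using AddSubmonoid.closure_induction with
  | mem z hz =>
      obtain ⟨ε, -, u, hu, rfl⟩ := hz
      have hu := (mem_AplusParity.mp hu).1
      rw [Tr_reflForm hu hu]
      exact star_mul_self_nonneg _
  | zero => rw [map_zero]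
  | add u v _ _ hu hv => rw [map_add]; exact add_nonneg hu hv

lemma Tr_gauge (x : S.carrier) : S.Tr (S.gauge x) = S.Tr x := by
  induction S.basis_span x using Submodule.span_induction with
  | mem z hz =>
      obtain ⟨⟨p, q⟩, rfl⟩ := hz
      change S.Tr (S.gauge (S.reflForm (S.C p) (S.C q))) = S.Tr (S.reflForm (S.C p) (S.C q))
      rw [gauge_reflForm (by omega) (by omega) (C_mem_AplusParity p.2) (C_mem_AplusParity q.2),
        map_smul, Tr_reflForm_C p.2 q.2, Tr_C p.2, Tr_C q.2]
      split_ifs <;> simp_all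
  | zero => rw [map_zero]
  | add u v _ _ hu hv => rw [map_add, map_add, map_add, hu, hv]
  | smul z u _ hu => rw [map_smul, map_smul, map_smul, hu]

lemma Tr_mul_evenPart {w : S.carrier} (hw : S.gauge w = w) (x : S.carrier) :
    S.Tr (S.evenPart x * w) = S.Tr (x * w) := by
  have hgw : S.gauge x * w = S.gauge (x * w) := by rw [map_mul, hw]
  rw [evenPart_apply, smul_mul_assoc, add_mul, hgw, map_smul, map_add, Tr_gauge, ← two_smul ℂ,
    smul_smul, inv_mul_cancel₀ two_ne_zero, one_smul]

lemma gauge_expm {x : S.carrier} (hx : S.gauge x = x) : S.gauge (S.expm x) = S.expm x := by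
  rw [expm, NormedSpace.map_exp_of_mem_ball (𝕂 := ℂ) S.gauge
    S.gauge.toLinearMap.continuous_of_finiteDimensional x
    ((NormedSpace.expSeries_radius_eq_top ℂ S.carrier).symm ▸ edist_lt_top _ _), hx]

lemma Tr_mul_expm_nonneg {Q T : S.carrier} (hQ : Q ∈ S.reflectionCone)
    (hT : T ∈ S.reflectionCone) : 0 ≤ S.Tr (Q * S.expm T) :=
  NormedSpace.exp_nonneg_of_pow_nonneg
    (LinearMap.toContinuousLinearMap (S.Tr ∘ₗ LinearMap.mulLeft ℂ Q))
    fun n => Tr_nonneg_of_mem_reflectionCone (mul_mem hQ (pow_mem hT n))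

lemma reflForm_self_mem_reflectionCone {ε : ℕ} (hε : ε ≤ 1) {u : S.carrier}
    (hu : u ∈ S.AplusParity ε) : S.reflForm u u ∈ S.reflectionCone :=
  (Submonoid.subsemiringClosure_mem _).mpr (AddSubmonoid.subset_closure ⟨ε, hε, u, hu, rfl⟩)

lemma evenPart_reflForm_add_self {e o : S.carrier} (he : e ∈ S.AplusParity 0)
    (ho : o ∈ S.AplusParity 1) :
    S.evenPart (S.reflForm (e + o) (e + o)) = S.reflForm e e + S.reflForm o o := by
  have hee : S.gauge (S.reflForm e e) = S.reflForm e e := by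
    simpa using gauge_reflForm zero_le_one zero_le_one he he
  have heo : S.gauge (S.reflForm e o) = -S.reflForm e o := by
    simpa using gauge_reflForm zero_le_one le_rfl he ho
  have hoe : S.gauge (S.reflForm o e) = -S.reflForm o e := by
    simpa using gauge_reflForm le_rfl zero_le_one ho he
  have hoo : S.gauge (S.reflForm o o) = S.reflForm o o := by
    simpa using gauge_reflForm le_rfl le_rfl ho ho
  simp only [map_add, LinearMap.add_apply, evenPart_of_gauge_eq hee, evenPart_of_gauge_eq_neg heo,
    evenPart_of_gauge_eq_neg hoe, evenPart_of_gauge_eq hoo, add_zero, zero_add]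

lemma evenPart_reflForm_self_mem {u : S.carrier} (hu : u ∈ S.Aplus) :
    S.evenPart (S.reflForm u u) ∈ S.reflectionCone := by
  rw [← evenPart_add_oddPart u, evenPart_reflForm_add_self (evenPart_mem hu) (oddPart_mem hu)]
  exact add_mem (reflForm_self_mem_reflectionCone zero_le_one (evenPart_mem hu))
    (reflForm_self_mem_reflectionCone le_rfl (oddPart_mem hu))

lemma negHam_eq_sum (Jc : List S.Λ → List S.Λ → ℂ) :
    -S.Ham Jc = ∑ p : S.PIdx, ∑ q : S.PIdx, Jc p q • S.reflForm (S.C p) (S.C q) := by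
  rw [Ham, neg_neg, ← Finset.sum_coe_sort S.P]
  exact Finset.sum_congr rfl fun p _ => (Finset.sum_coe_sort S.P _).symm

lemma negHam_mem_reflectionCone {Jc : List S.Λ → List S.Λ → ℂ}
    (hGI : S.gauge (S.Ham Jc) = S.Ham Jc) (hpsd : (S.Jmat Jc).PosSemidef) :
    -S.Ham Jc ∈ S.reflectionCone := by
  obtain ⟨m, v, hv⟩ := Matrix.posSemidef_iff_eq_sum_vecMulVec.mp hpsd
  have hJc : ∀ p q : S.PIdx, Jc p q = ∑ i, v i p * star (v i q) := fun p q => by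
    simpa [Jmat, Matrix.sum_apply, Matrix.vecMulVec_apply] using congrFun (congrFun hv p) q
  let u : Fin m → S.carrier := fun i => ∑ p, star (v i p) • S.C p
  have hu : ∀ i, u i ∈ S.Aplus := fun i =>
    Subalgebra.sum_mem _ fun p _ => Subalgebra.smul_mem _ (S.C_mem_Aplus p.2) _
  have hsum : -S.Ham Jc = ∑ i, S.reflForm (u i) (u i) := by
    simp only [u, negHam_eq_sum, reflForm_sum_smul_C, star_star, hJc, Finset.sum_smul]
    exact (Finset.sum_congr rfl fun p _ => Finset.sum_comm).trans Finset.sum_comm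
  rw [← evenPart_of_gauge_eq (x := -S.Ham Jc) (by rw [map_neg, hGI]), hsum, map_sum]
  exact sum_mem fun i _ => evenPart_reflForm_self_mem (hu i)

end MajoranaSetting

theorem reflection_positivity_I_general (S : MajoranaSetting)
    (Jc : List S.Λ → List S.Λ → ℂ)
    (hGI : S.gauge (S.Ham Jc) = S.Ham Jc)
    (hpsd : (S.Jmat Jc).PosSemidef) :
    ∀ A ∈ S.Aplus, 0 ≤ S.Tr (S.twist (S.Θ A) A * S.expm (-(S.Ham Jc))) := by
  intro A hA
  have hw := S.gauge_expm (x := -S.Ham Jc) (by rw [map_neg, hGI])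
  change 0 ≤ S.Tr (S.reflForm A A * _)
  rw [← S.Tr_mul_evenPart hw (S.reflForm A A)]
  exact S.Tr_mul_expm_nonneg (S.evenPart_reflForm_self_mem hA)
    (S.negHam_mem_reflectionCone hGI hpsd)

/-- Reflection positivity of `ω_H`, Part I: if `H` is reflection
invariant and globally gauge invariant and the full coupling matrix `J` is
positive semidefinite, then `ω_H(A) = Tr(A e^{-H})` is reflection positive on `𝔄₊`. -/
theorem reflection_positivity_I (S : MajoranaSetting)
    (Jc : List S.Λ → List S.Λ → ℂ)
    (hRI : S.Θ (S.Ham Jc) = S.Ham Jc)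
    (hGI : S.gauge (S.Ham Jc) = S.Ham Jc)
    (hpsd : (S.Jmat Jc).PosSemidef) :
    ∀ A ∈ S.Aplus, 0 ≤ S.Tr (S.twist (S.Θ A) A * S.expm (-(S.Ham Jc))) :=
  reflection_positivity_I_general S Jc hGI hpsd
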